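/- arXiv:1705.00127 — 3 statements merged into one kernel-verified Lean document; each statement's English description precedes it below -/
import Mathlib

section
/- Let p be a positive integer and let (X, I) be an independence system that is a p-system. Then (X, I) is p-extendible if and only if it is hereditary, i.e.: for every Y ⊆ X the restriction (X \ Y, I|_{X\Y}), whose independent sets are the members of I contained in X \ Y, is a p-system, and for every Y ∈ I the contraction (X \ Y, I/Y), whose independent sets are the sets Z ⊆ X \ Y with Z ∪ Y ∈ I, is a p-system. -/
open Finset

/-- A downward-closed independence system on the finite type `α`. -/
def DownClosed {α : Type*} (I : Finset α → Prop) : Prop :=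
  I ∅ ∧ ∀ A B : Finset α, I A → B ⊆ A → I B
/-- `(X, I)` is `p`-extendible: whenever `A ⊆ B`, `A, B ∈ I` and `A ∪ {e} ∈ I`,
there is `Z ⊆ B \ A` with `|Z| ≤ p` and `(B \ Z) ∪ {e} ∈ I`. -/
def Extendible {α : Type*} [DecidableEq α] (p : ℕ) (I : Finset α → Prop) : Prop :=
  ∀ A B : Finset α, ∀ e : α, A ⊆ B → I A → I B → I (insert e A) →
    ∃ Z ⊆ B \ A, Z.card ≤ p ∧ I (insert e (B \ Z))
/-- `J` is a base of `Y`: a maximal independent subset of `Y`. -/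
def IsBaseOf {α : Type*} [DecidableEq α] (I : Finset α → Prop) (Y J : Finset α) : Prop :=
  J ⊆ Y ∧ I J ∧ ∀ e ∈ Y, e ∉ J → ¬ I (insert e J)

/-- `(X, I)` is a `p`-system: any two bases of any `Y` have cardinalities within a factor `p`. -/
def PSystem {α : Type*} [DecidableEq α] (p : ℕ) (I : Finset α → Prop) : Prop :=
  ∀ Y J J' : Finset α, IsBaseOf I Y J → IsBaseOf I Y J' → J.card ≤ p * J'.card

lemma extendible_psystem {α : Type*} [DecidableEq α] (p : ℕ) (hp : 0 < p)
    (I : Finset α → Prop) (hdc : DownClosed I) (hex : Extendible p I) :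
    PSystem p I := by
  rintro Y J J' ⟨hJY, hJI, hJmax⟩ ⟨hJ'Y, hJ'I, hJ'max⟩
  have key : ∀ T : Finset α, T ⊆ J' →
      ∃ C, I C ∧ T ⊆ C ∧ C ⊆ J ∪ T ∧ J.card ≤ C.card + T.card * (p - 1) := by
    intro T
    induction T using Finset.induction_on with
    | empty => exact fun _ => ⟨J, hJI, by simp, by simp, by simp⟩
    | @insert f T hf ih =>
      intro hT
      obtain ⟨C, hCI, hTC, hCJ, hcard⟩ := ih (fun x hx => hT (mem_insert_of_mem hx))
      by_cases hfC : f ∈ C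
      · refine ⟨C, hCI, insert_subset hfC hTC,
          hCJ.trans (union_subset_union_right (subset_insert _ _)), ?_⟩
        have : T.card ≤ (insert f T).card := card_le_card (subset_insert _ _)
        exact hcard.trans (Nat.add_le_add_left (Nat.mul_le_mul_right _ this) _)
      · have hIT : I T := hdc.2 J' T hJ'I (fun x hx => hT (mem_insert_of_mem hx))
        have hIfT : I (insert f T) := hdc.2 J' _ hJ'I hT
        obtain ⟨Z, hZ, hZcard, hCZ⟩ := hex T C f hTC hIT hCI hIfT
        have hZC : Z ⊆ C := hZ.trans (sdiff_subset)
        have hTCZ : T ⊆ C \ Z := by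
          refine subset_sdiff.mpr ⟨hTC, disjoint_left.mpr fun {x} hxT hxZ => ?_⟩
          exact (mem_sdiff.mp (hZ hxZ)).2 hxT
        refine ⟨insert f (C \ Z), hCZ, insert_subset_insert _ hTCZ, ?_, ?_⟩
        · apply insert_subset (mem_union_right _ (mem_insert_self _ _))
          exact (sdiff_subset.trans hCJ).trans
            (union_subset_union_right (subset_insert _ _))
        · have h1 : (C \ Z).card + Z.card = C.card := card_sdiff_add_card_eq_card hZC
          have h2 : f ∉ C \ Z := fun h => hfC (mem_sdiff.mp h).1
          have h3 : (insert f (C \ Z)).card = (C \ Z).card + 1 := card_insert_of_notMem h2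
          have h4 : (insert f T).card = T.card + 1 := card_insert_of_notMem hf
          have h5 : (T.card + 1) * (p - 1) = T.card * (p - 1) + (p - 1) := by ring
          rw [h3, h4, h5]
          omega
  obtain ⟨C, hCI, hJ'C, hCJJ', hcard⟩ := key J' (Finset.Subset.refl _)
  have hCY : C ⊆ Y := hCJJ'.trans (union_subset hJY hJ'Y)
  have hCJ' : C = J' := by
    apply Finset.Subset.antisymm _ hJ'C
    intro x hx
    by_contra hxJ'
    exact hJ'max x (hCY hx) hxJ' (hdc.2 C _ hCI (insert_subset hx hJ'C))
  subst hCJ'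
  have h1 : 1 + (p - 1) = p := by omega
  calc J.card ≤ C.card + C.card * (p - 1) := hcard
    _ = C.card * (1 + (p - 1)) := by ring
    _ = C.card * p := by rw [h1]
    _ = p * C.card := Nat.mul_comm _ _

/-- A `p`-system is `p`-extendible iff it is hereditary: every
restriction (deleting a set `Y` of elements) is a `p`-system and every contraction by an
independent set `Y` is a `p`-system. -/
theorem pExtendible_iff_hereditary
    {α : Type*} [Fintype α] [DecidableEq α] (p : ℕ) (hp : 0 < p)
    (I : Finset α → Prop) (hdc : DownClosed I) (hps : PSystem p I) :
    Extendible p I ↔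
      ((∀ Y : Finset α, PSystem p (fun S : Finset α => I S ∧ Disjoint S Y)) ∧
       (∀ Y : Finset α, I Y →
         PSystem p (fun Z : Finset α => Disjoint Z Y ∧ I (Z ∪ Y)))) := by
  constructor
  · intro hex
    constructor
    · -- restrictions
      intro Y
      apply extendible_psystem p hp _ ?_ ?_
      · exact ⟨⟨hdc.1, disjoint_empty_left _⟩,
          fun A B hA hBA => ⟨hdc.2 A B hA.1 hBA, hA.2.mono_left hBA⟩⟩
      · rintro A B e hAB ⟨hAI, hAd⟩ ⟨hBI, hBd⟩ ⟨heI, hed⟩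
        obtain ⟨Z, hZ, hZc, hZI⟩ := hex A B e hAB hAI hBI heI
        have heY : e ∉ Y := disjoint_left.mp hed (mem_insert_self _ _)
        refine ⟨Z, hZ, hZc, hZI, ?_⟩
        exact disjoint_left.mpr fun {x} hx =>
          (mem_insert.mp hx).elim (fun h => h ▸ heY)
            (fun h => disjoint_left.mp hBd (mem_sdiff.mp h).1)
    · -- contractions
      intro Y hY
      apply extendible_psystem p hp _ ?_ ?_
      · refine ⟨⟨disjoint_empty_left _, by simpa using hY⟩,
          fun A B hA hBA => ⟨hA.1.mono_left hBA, hdc.2 _ _ hA.2 (union_subset_union_left hBA)⟩⟩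
      · rintro A B e hAB ⟨hAd, hAI⟩ ⟨hBd, hBI⟩ ⟨hed, heI⟩
        have heAY : insert e (A ∪ Y) = insert e A ∪ Y := by
          rw [insert_union]
        obtain ⟨Z, hZ, hZc, hZI⟩ := hex (A ∪ Y) (B ∪ Y) e
          (union_subset_union_left hAB) hAI hBI (by rwa [heAY])
        have hZBA : Z ⊆ B \ A := by
          intro x hx
          have := mem_sdiff.mp (hZ hx)
          simp only [mem_union] at this
          exact mem_sdiff.mpr ⟨this.1.resolve_right (fun h => this.2 (Or.inr h)),
            fun h => this.2 (Or.inl h)⟩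
        have hZY : ∀ x ∈ Z, x ∉ Y := fun x hx h =>
          (mem_sdiff.mp (hZ hx)).2 (mem_union_right _ h)
        have heY : e ∉ Y := disjoint_left.mp hed (mem_insert_self _ _)
        refine ⟨Z, hZBA, hZc, ?_, ?_⟩
        · exact disjoint_left.mpr fun {x} hx =>
            (mem_insert.mp hx).elim (fun h => h ▸ heY)
              (fun h => disjoint_left.mp hBd (mem_sdiff.mp h).1)
        · have : insert e (B \ Z) ∪ Y = insert e ((B ∪ Y) \ Z) := by
            ext x
            simp only [mem_union, mem_insert, mem_sdiff]
            constructor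
            · rintro (⟨h|⟨h1,h2⟩⟩|h)
              · exact Or.inl h
              · exact Or.inr ⟨Or.inl h1, h2⟩
              · exact Or.inr ⟨Or.inr h, fun hz => hZY x hz h⟩
            · rintro (h|⟨(h|h),h2⟩)
              · exact Or.inl (Or.inl h)
              · exact Or.inl (Or.inr ⟨h, h2⟩)
              · exact Or.inr h
          rwa [this]
  · rintro ⟨-, hcon⟩ A B e hAB hA hB heA
    classical
    by_cases hBe : I (insert e B)
    · exact ⟨∅, empty_subset _, by simpa using hp, by simpa using hBe⟩
    have heB : e ∉ B := fun h => hBe (by rwa [insert_eq_self.mpr h])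
    -- choose S of maximum cardinality among subsets T of B \ A with insert e (T ∪ A) ∈ I
    set F := (B \ A).powerset.filter (fun T => I (insert e (T ∪ A))) with hF
    have hFne : F.Nonempty := ⟨∅, by
      simp only [hF, mem_filter, mem_powerset]
      exact ⟨empty_subset _, by simpa using heA⟩⟩
    obtain ⟨S, hSF, hSmax⟩ := F.exists_max_image card hFne
    simp only [hF, mem_filter, mem_powerset] at hSF
    obtain ⟨hS1, hS2⟩ := hSF
    have hSmax' : ∀ f ∈ B \ A, f ∉ S → ¬ I (insert e (insert f S ∪ A)) := by
      intro f hfBA hfS hI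
      have hmem : insert f S ∈ F := by
        simp only [hF, mem_filter, mem_powerset]
        exact ⟨insert_subset hfBA hS1, hI⟩
      have := hSmax _ hmem
      rw [card_insert_of_notMem hfS] at this
      omega
    have hSA : I (S ∪ A) := hdc.2 _ _ hS2 (subset_insert _ _)
    have hSB : S ⊆ B := hS1.trans sdiff_subset
    have hSAB : S ∪ A ⊆ B := union_subset hSB hAB
    set Z := (B \ A) \ S with hZdef
    have heSA : e ∉ S ∪ A := fun h => heB (hSAB h)
    -- the contraction by S ∪ A is a p-system
    have hK := hcon (S ∪ A) hSA
    have hbase1 : IsBaseOf (fun T : Finset α => Disjoint T (S ∪ A) ∧ I (T ∪ (S ∪ A)))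
        (insert e Z) {e} := by
      refine ⟨singleton_subset_iff.mpr (mem_insert_self _ _),
        ⟨by simpa using heSA, by rw [← insert_eq]; exact hS2⟩, ?_⟩
      intro f hf hfe hKf
      have hfZ : f ∈ Z := (mem_insert.mp hf).resolve_left (by simpa using hfe)
      have hfBA : f ∈ B \ A := (mem_sdiff.mp hfZ).1
      have hfS : f ∉ S := (mem_sdiff.mp hfZ).2
      apply hSmax' f hfBA hfS
      have : insert f {e} ∪ (S ∪ A) = insert e (insert f S ∪ A) := by
        ext x
        simp only [mem_union, mem_insert, mem_singleton]
        tauto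
      rw [this] at hKf
      exact hKf.2
    have hZSA : Z ∪ (S ∪ A) = B := by
      ext x
      simp only [hZdef, mem_union, mem_sdiff]
      constructor
      · rintro ((⟨⟨h,-⟩,-⟩)|h|h)
        · exact h
        · exact hSB h
        · exact hAB h
      · intro hx
        by_cases hxA : x ∈ A
        · exact Or.inr (Or.inr hxA)
        by_cases hxS : x ∈ S
        · exact Or.inr (Or.inl hxS)
        · exact Or.inl ⟨⟨hx, hxA⟩, hxS⟩
    have hbase2 : IsBaseOf (fun T : Finset α => Disjoint T (S ∪ A) ∧ I (T ∪ (S ∪ A)))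
        (insert e Z) Z := by
      refine ⟨subset_insert _ _, ⟨?_, by rwa [hZSA]⟩, ?_⟩
      · refine disjoint_left.mpr fun {x} hx => ?_
        simp only [hZdef, mem_sdiff] at hx
        intro h
        exact (mem_union.mp h).elim hx.2 (fun h' => hx.1.2 h')
      · intro f hf hfZ hKf
        have hfe : f = e := by
          rcases mem_insert.mp hf with h | h
          · exact h
          · exact absurd h hfZ
        subst hfe
        apply hBe
        have : insert f Z ∪ (S ∪ A) = insert f B := by
          rw [insert_union, hZSA]
        rw [this] at hKf
        exact hKf.2
    have hZcard : Z.card ≤ p := by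
      have := hK (insert e Z) Z {e} hbase2 hbase1
      simpa using this
    refine ⟨Z, sdiff_subset, hZcard, ?_⟩
    · have : B \ Z = S ∪ A := by
        rw [hZdef]
        ext x
        constructor
        · intro hx
          obtain ⟨hxB, hxZ⟩ := mem_sdiff.mp hx
          by_cases hxA : x ∈ A
          · exact mem_union_right _ hxA
          · by_cases hxS : x ∈ S
            · exact mem_union_left _ hxS
            · exact absurd (mem_sdiff.mpr ⟨mem_sdiff.mpr ⟨hxB, hxA⟩, hxS⟩) hxZ
        · intro hx
          refine mem_sdiff.mpr ⟨hSAB hx, fun hc => ?_⟩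
          obtain ⟨hc1, hc2⟩ := mem_sdiff.mp hc
          rcases mem_union.mp hx with h|h
          · exact hc2 h
          · exact (mem_sdiff.mp hc1).2 h
      rwa [this]
end

section
/- For every integer k ≥ 2 and every γ with 1 ≤ γ < 2 − 1/k, there exists a finite ground set X with |X| = k + 1 and a monotone submodular function f : 2^X → ℝ≥0 such that, under the uniform matroid constraint I = { S ⊆ X : |S| ≤ k }, the instance (X, I, f) is γ-stable with unique optimal solution S*, and yet every greedy run (repeatedly adding an element of maximum marginal value of f while the set has size at most k, until the set has size k) outputs a set different from S*. -/
open Finset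

/-- Monotonicity of a set function. -/
def MonotoneFn {α : Type*} (f : Finset α → ℝ) : Prop :=
  ∀ A B : Finset α, A ⊆ B → f A ≤ f B

/-- Submodularity of a set function. -/
def SubmodularFn {α : Type*} [DecidableEq α] (f : Finset α → ℝ) : Prop :=
  ∀ A B : Finset α, f (A ∪ B) + f (A ∩ B) ≤ f A + f B

/-- `f'` is a `γ`-perturbation of the monotone submodular function `f`. -/
def IsPerturbation {α : Type*} [DecidableEq α] (γ : ℝ) (f f' : Finset α → ℝ) : Prop :=
  (∀ S : Finset α, 0 ≤ f' S) ∧ MonotoneFn f' ∧ SubmodularFn f' ∧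
  (∀ S : Finset α, f S ≤ f' S ∧ f' S ≤ γ * f S) ∧
  ∀ S : Finset α, ∀ j ∉ S,
    f (insert j S) - f S ≤ f' (insert j S) - f' S ∧
    (f' (insert j S) - f' S) - (f (insert j S) - f S) ≤ (γ - 1) * f {j}
/-- The submodular instance `(I, f)` is `γ`-stable with (unique) optimal solution `S`:
for every `γ`-perturbation `f'` of `f`, `S` is the unique maximizer of `f'` over `I`. -/
def SubmodStable {α : Type*} [DecidableEq α] (I : Finset α → Prop)
    (f : Finset α → ℝ) (γ : ℝ) (S : Finset α) : Prop :=
  I S ∧ ∀ f' : Finset α → ℝ, IsPerturbation γ f f' →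
    ∀ T : Finset α, I T → T ≠ S → f' T < f' S
/-- A greedy run for a set function `f`: every prefix is independent, each `eᵢ`
maximizes the marginal value among feasible additions, and the final set is maximal. -/
def GreedyRunSub {α : Type*} [DecidableEq α] (I : Finset α → Prop)
    (f : Finset α → ℝ) (l : List α) : Prop :=
  (∀ i : Fin l.length,
    l.get i ∉ (l.take i.val).toFinset ∧
    I (insert (l.get i) (l.take i.val).toFinset) ∧
    ∀ e : α, e ∉ (l.take i.val).toFinset → I (insert e (l.take i.val).toFinset) →
      f (insert e (l.take i.val).toFinset) - f (l.take i.val).toFinset ≤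
        f (insert (l.get i) (l.take i.val).toFinset) - f (l.take i.val).toFinset) ∧
  ∀ e : α, e ∉ l.toFinset → ¬ I (insert e l.toFinset)

/-!
Let `z` be a distinguished element of a ground set `X` of size `k + 1` and `Y = X \ {z}`. Take
`f S = |S \ {z}|` when `z ∉ S` and `f S = (1 - ε) |S \ {z}| + ε k` when `z ∈ S`, a convex
combination of two coverage functions, hence monotone and submodular. For `ε > 1/k` the singleton
`{z}` is worth `ε k > 1 = f {y}`, so greedy starts with `z` and cannot output `Y`. Every other basis
is `X \ {j}` for some `j ∈ Y`, and it differs from `Y` by swapping `j` for `z`: on the common part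
the marginal of `j` is `1`, that of `z` is `ε`, and a `γ`-perturbation can raise the latter by at
most `(γ - 1) f {z} = (γ - 1) ε k`. So `Y` stays the unique optimum as long as
`ε (1 + (γ - 1) k) < 1`, and such an `ε > 1/k` exists precisely when `γ < 2 - 1/k`.
-/

section SetFunction

variable {α β : Type*} {f g : Finset α → ℝ}

theorem MonotoneFn.add (hf : MonotoneFn f) (hg : MonotoneFn g) : MonotoneFn (f + g) :=
  fun A B h => add_le_add (hf A B h) (hg A B h)

theorem MonotoneFn.const_mul (hf : MonotoneFn f) {c : ℝ} (hc : 0 ≤ c) :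
    MonotoneFn fun S => c * f S :=
  fun A B h => mul_le_mul_of_nonneg_left (hf A B h) hc

theorem monotoneFn_card_biUnion [DecidableEq β] (cov : α → Finset β) :
    MonotoneFn fun S : Finset α => ((S.biUnion cov).card : ℝ) :=
  fun _ _ h => Nat.cast_le.mpr (card_le_card (biUnion_subset_biUnion_of_subset_left cov h))

variable [DecidableEq α]

theorem SubmodularFn.add (hf : SubmodularFn f) (hg : SubmodularFn g) : SubmodularFn (f + g) :=
  fun A B => by have := hf A B; have := hg A B; simp only [Pi.add_apply]; linarith

theorem SubmodularFn.const_mul (hf : SubmodularFn f) {c : ℝ} (hc : 0 ≤ c) :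
    SubmodularFn fun S => c * f S :=
  fun A B => by nlinarith [hf A B]

theorem submodularFn_card_biUnion [DecidableEq β] (cov : α → Finset β) :
    SubmodularFn fun S : Finset α => ((S.biUnion cov).card : ℝ) := by
  intro A B
  dsimp only
  have hinter : (A ∩ B).biUnion cov ⊆ A.biUnion cov ∩ B.biUnion cov :=
    subset_inter (biUnion_subset_biUnion_of_subset_left cov inter_subset_left)
      (biUnion_subset_biUnion_of_subset_left cov inter_subset_right)
  have := card_union_add_card_inter (A.biUnion cov) (B.biUnion cov)
  have := card_le_card hinter
  rw [union_biUnion]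
  exact_mod_cast (by omega : _ ≤ _)

end SetFunction

section Perturbation

variable {α : Type*} [DecidableEq α] {γ : ℝ} {f f' : Finset α → ℝ}

theorem IsPerturbation.lt_of_marginal_lt (hf' : IsPerturbation γ f f') {S : Finset α} {i j : α}
    (hi : i ∉ S) (hj : j ∉ S)
    (h : f (insert i S) - f S + (γ - 1) * f {i} < f (insert j S) - f S) :
    f' (insert i S) < f' (insert j S) := by
  have hi' := (hf'.2.2.2.2 S i hi).2
  have hj' := (hf'.2.2.2.2 S j hj).1
  linarith

theorem submodStable_card_le_of_forall_lt [Fintype α] {n : ℕ} (hn : Fintype.card α = n + 1)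
    (z : α)
    (h : ∀ f' : Finset α → ℝ, IsPerturbation γ f f' →
      ∀ j ≠ z, f' (univ.erase j) < f' (univ.erase z)) :
    SubmodStable (fun S : Finset α => S.card ≤ n) f γ (univ.erase z) := by
  refine ⟨by simp [card_erase_of_mem, hn], fun f' hf' T hT hTz => ?_⟩
  obtain ⟨j, hj⟩ : ∃ j, j ∉ insert z T := by
    by_contra! hall
    have hzT : insert z T = univ := eq_univ_iff_forall.mpr hall
    by_cases hz : z ∈ T
    · rw [insert_eq_of_mem hz] at hzT
      have : T.card = n + 1 := by rw [hzT, card_univ, hn]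
      exact absurd hT (by simp only [this]; omega)
    · exact hTz (by rw [← hzT, erase_insert hz])
  rw [mem_insert, not_or] at hj
  have hTj : T ⊆ univ.erase j := fun x hx => mem_erase.mpr ⟨fun h => hj.2 (h ▸ hx), mem_univ x⟩
  exact (hf'.2.1 _ _ hTj).trans_lt (h f' hf' j hj.1)

end Perturbation

theorem GreedyRunSub.mem_toFinset_of_singleton_lt {α : Type*} [DecidableEq α]
    {I : Finset α → Prop} {f : Finset α → ℝ} {l : List α} (hl : GreedyRunSub I f l) {z : α}
    (hIz : I {z}) (hz : ∀ e ≠ z, f {e} < f {z}) : z ∈ l.toFinset := by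
  obtain ⟨hstep, hmax⟩ := hl
  cases l with
  | nil => exact absurd hIz (hmax z (List.mem_toFinset.not.mpr List.not_mem_nil))
  | cons e l =>
    have hfirst := (hstep ⟨0, by simp⟩).2.2 z (by simp) (by simpa using hIz)
    simp only [List.get_eq_getElem, List.getElem_cons_zero, List.take_zero, List.toFinset_nil,
      insert_empty, sub_le_sub_iff_right] at hfirst
    by_cases hez : e = z
    · simp [hez]
    · exact absurd hfirst (hz e hez).not_ge

section Star

variable {α : Type*} [DecidableEq α]

theorem biUnion_singleton_erase (z : α) (S : Finset α) :
    S.biUnion (fun y => ({y} : Finset α).erase z) = S.erase z := by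
  ext x
  simp only [mem_biUnion, mem_erase, mem_singleton]
  grind

variable [Fintype α]

def starCover (z y : α) : Finset α := if y = z then univ.erase z else {y}

theorem biUnion_starCover (z : α) (S : Finset α) :
    S.biUnion (starCover z) = if z ∈ S then univ.erase z else S := by
  ext x
  simp only [mem_biUnion, starCover]
  split_ifs <;> grind

def starFn (z : α) (ε : ℝ) (S : Finset α) : ℝ :=
  (1 - ε) * (S.biUnion fun y => ({y} : Finset α).erase z).card +
    ε * (S.biUnion (starCover z)).card

variable {z : α} {ε : ℝ}

theorem starFn_nonneg (hε0 : 0 ≤ ε) (hε1 : ε ≤ 1) (S : Finset α) : 0 ≤ starFn z ε S := by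
  unfold starFn
  have : 0 ≤ 1 - ε := by linarith
  positivity

theorem monotoneFn_starFn (hε0 : 0 ≤ ε) (hε1 : ε ≤ 1) : MonotoneFn (starFn z ε) :=
  ((monotoneFn_card_biUnion _).const_mul (by linarith)).add
    ((monotoneFn_card_biUnion _).const_mul hε0)

theorem submodularFn_starFn (hε0 : 0 ≤ ε) (hε1 : ε ≤ 1) : SubmodularFn (starFn z ε) :=
  ((submodularFn_card_biUnion _).const_mul (by linarith)).add
    ((submodularFn_card_biUnion _).const_mul hε0)

theorem starFn_of_notMem {S : Finset α} (hz : z ∉ S) : starFn z ε S = S.card := by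
  simp only [starFn, biUnion_singleton_erase, biUnion_starCover, if_neg hz, erase_eq_of_notMem hz]
  ring

theorem starFn_of_mem {S : Finset α} (hz : z ∈ S) :
    starFn z ε S = (1 - ε) * (S.erase z).card + ε * (univ.erase z).card := by
  simp only [starFn, biUnion_singleton_erase, biUnion_starCover, if_pos hz]

theorem starFn_singleton_self : starFn z ε {z} = ε * (univ.erase z).card := by
  simp [starFn_of_mem (mem_singleton_self z)]

theorem starFn_singleton_of_ne {e : α} (he : e ≠ z) : starFn z ε {e} = 1 := by
  simp [starFn_of_notMem (notMem_singleton.mpr he.symm)]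

theorem submodStable_starFn {γ : ℝ} {n : ℕ} (hn : Fintype.card α = n + 1)
    (hε : ε * (1 + (γ - 1) * n) < 1) :
    SubmodStable (fun S : Finset α => S.card ≤ n) (starFn z ε) γ (univ.erase z) := by
  have hcard : (univ.erase z).card = n := by simp [card_erase_of_mem, hn]
  refine submodStable_card_le_of_forall_lt hn z fun f' hf' j hjz => ?_
  set W := (univ.erase z).erase j with hW
  have hzW : z ∉ W := fun h => (mem_erase.mp (mem_of_mem_erase h)).1 rfl
  have hjW : j ∉ W := notMem_erase j _
  have hzj : insert z W = univ.erase j := by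
    rw [hW, erase_right_comm, insert_erase (mem_erase.mpr ⟨hjz.symm, mem_univ z⟩)]
  have hjz' : insert j W = univ.erase z := insert_erase (mem_erase.mpr ⟨hjz, mem_univ j⟩)
  have hWcard : (W.card : ℝ) = n - 1 := by
    rw [eq_sub_iff_add_eq]
    exact_mod_cast (card_insert_of_notMem hjW).symm.trans (hjz' ▸ hcard)
  rw [← hzj, ← hjz']
  refine hf'.lt_of_marginal_lt hzW hjW ?_
  rw [starFn_of_mem (mem_insert_self z W), erase_insert hzW, starFn_of_notMem hzW, hjz',
    starFn_of_notMem (notMem_erase z univ), starFn_singleton_self, hcard, hWcard]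
  linear_combination hε

end Star

/-- For every `k ≥ 2` and every `γ` with `1 ≤ γ < 2 − 1/k`, there is a
monotone submodular function on a ground set of `k+1` elements such that, under the
uniform matroid of rank `k`, the instance is `γ`-stable and yet every greedy run outputs
a set different from the optimal solution `S*`. -/
theorem greedy_fails_uniform_matroid_below_threshold
    (k : ℕ) (hk : 2 ≤ k) (γ : ℝ) (hγ1 : 1 ≤ γ) (hγ2 : γ < 2 - 1 / (k : ℝ)) :
    ∃ (f : Finset (Fin (k + 1)) → ℝ) (Sstar : Finset (Fin (k + 1))),
      (∀ S, 0 ≤ f S) ∧ MonotoneFn f ∧ SubmodularFn f ∧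
      SubmodStable (fun S : Finset (Fin (k + 1)) => S.card ≤ k) f γ Sstar ∧
      ∀ l : List (Fin (k + 1)),
        GreedyRunSub (fun S : Finset (Fin (k + 1)) => S.card ≤ k) f l →
        l.toFinset ≠ Sstar := by
  have hk0 : (0 : ℝ) < k := by positivity
  have hc : 1 ≤ 1 + (γ - 1) * k := by nlinarith
  have hck : 1 + (γ - 1) * k < k := by
    have := mul_lt_mul_of_pos_right hγ2 hk0
    rw [sub_mul, one_div_mul_cancel hk0.ne'] at this
    linarith
  obtain ⟨ε, hkε, hεc⟩ := _root_.exists_between (one_div_lt_one_div_of_lt (by linarith) hck)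
  have hε0 : 0 ≤ ε := ((by positivity : (0 : ℝ) < 1 / k).trans hkε).le
  have hε1 : ε ≤ 1 := hεc.le.trans (div_le_one_of_le₀ hc (by linarith))
  refine ⟨starFn 0 ε, univ.erase 0, starFn_nonneg hε0 hε1, monotoneFn_starFn hε0 hε1,
    submodularFn_starFn hε0 hε1, submodStable_starFn (by simp) ?_, fun l hl hlY => ?_⟩
  · exact (lt_div_iff₀ (by linarith)).mp hεc
  have hz := hl.mem_toFinset_of_singleton_lt (z := 0) (by simp; omega) fun e he => by
    rw [starFn_singleton_of_ne he, starFn_singleton_self,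
      show (univ.erase (0 : Fin (k + 1))).card = k by simp]
    exact (div_lt_iff₀ hk0).mp hkε
  simp [hlY] at hz
end

section
/- For every ε ∈ (0, 1) there exists a 2-extendible independence system (X, I) with nonnegative additive weights w whose instance is (4−ε)-stable with unique optimal solution S*, together with a maximal independent set A ≠ S* that is a (2,1)-local optimum (for every e ∈ X \ A and Z ⊆ A with |Z| ≤ 2 and (A \ Z) ∪ {e} ∈ I, w((A \ Z) ∪ {e}) ≤ w(A)) and satisfies w(S*) ≥ (4−ε)·w(A). In particular, the p² approximation factor and the p²-stability recovery threshold of (p,1)-local search on p-extendible systems are tight for p = 2. -/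
open Finset

/-- The additive instance `(I, w)` is `γ`-stable with (unique) optimal solution `S`:
for every perturbation `w'` with `w ≤ w' ≤ γ·w`, `S` is the unique maximizer of `w'` over `I`. -/
def AddStable {α : Type*} (I : Finset α → Prop) (w : α → ℝ) (γ : ℝ)
    (S : Finset α) : Prop :=
  I S ∧ ∀ w' : α → ℝ, (∀ e, w e ≤ w' e ∧ w' e ≤ γ * w e) →
    ∀ T : Finset α, I T → T ≠ S → ∑ e ∈ T, w' e < ∑ e ∈ S, w' e
/-- `A` is a `(p,1)`-local optimum for `f` over `I`: no swap that removes at most `p`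
elements of `A` and adds one new element yields a feasible set of larger `f`-value. -/
def LocalOpt {α : Type*} [DecidableEq α] (p : ℕ) (I : Finset α → Prop)
    (f : Finset α → ℝ) (A : Finset α) : Prop :=
  ∀ e ∉ A, ∀ Z ⊆ A, Z.card ≤ p → I (insert e (A \ Z)) →
    f (insert e (A \ Z)) ≤ f A

/-!
Split the ground set into `m` elements satisfying `P` (the set `A`, weight `1`) and `2m - 2`
others (the set `S*`, weight `β = 2 - ε/4`). Charge `2` for each element of `A` and `1` for
each other element; a set is independent if it lies inside `A` or its load is at most `2m - 2`.
Removing any two elements of an independent set frees room for any new element, which gives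
2-extendibility. Adding an element to `A` forces the removal of two of its elements, so `A` is
a maximal `(2,1)`-local optimum. An independent set `T ≠ S*` of the second kind meeting `A` in
`t` elements misses at least `2t` elements of `S*`, and `4 - ε < 2β`; a subset of `A` loses to
`S*` because `(4 - ε)m < (2m - 2)β` once `m ≳ 8/ε`. Either way, no `(4 - ε)`-perturbation of
the weights lets `T` catch up with `S*`, and the last inequality is also `w(S*) ≥ (4 - ε) w(A)`.
-/

lemma addStable_of_mul_sum_sdiff_lt {α : Type*} [DecidableEq α] {I : Finset α → Prop}
    {w : α → ℝ} {γ : ℝ} {S : Finset α} (hS : I S)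
    (h : ∀ T, I T → T ≠ S → γ * ∑ e ∈ T \ S, w e < ∑ e ∈ S \ T, w e) :
    AddStable I w γ S := by
  refine ⟨hS, fun w' hw' T hT hTS => ?_⟩
  have hTS' : ∑ e ∈ T \ S, w' e ≤ γ * ∑ e ∈ T \ S, w e := by
    rw [mul_sum]; exact sum_le_sum fun e _ => (hw' e).2
  have hST' : ∑ e ∈ S \ T, w e ≤ ∑ e ∈ S \ T, w' e := sum_le_sum fun e _ => (hw' e).1
  rw [← sum_inter_add_sum_sdiff T S, ← sum_inter_add_sum_sdiff S T, inter_comm]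
  linarith [h T hT hTS]

namespace LoadSystem

variable {α : Type*} (P : α → Prop) [DecidablePred P]

def load (S : Finset α) : ℕ := ∑ x ∈ S, if P x then 2 else 1

def IsIndep (c : ℕ) (S : Finset α) : Prop := (∀ x ∈ S, P x) ∨ load P S ≤ c

def weight (β : ℝ) (x : α) : ℝ := if P x then 1 else β

variable {P} {β γ : ℝ}

lemma card_le_load (S : Finset α) : #S ≤ load P S := by
  rw [card_eq_sum_ones]
  exact sum_le_sum fun x _ => by split_ifs <;> simp

lemma load_of_forall {S : Finset α} (h : ∀ x ∈ S, P x) : load P S = 2 * #S := by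
  rw [load, sum_ite_of_true h, sum_const, smul_eq_mul, mul_comm]

lemma load_of_forall_not {S : Finset α} (h : ∀ x ∈ S, ¬ P x) : load P S = #S := by
  rw [load, sum_ite_of_false h, sum_const, smul_eq_mul, mul_one]

lemma sum_weight_of_forall {S : Finset α} (h : ∀ x ∈ S, P x) :
    ∑ x ∈ S, weight P β x = #S := by
  simp [weight, sum_ite_of_true h]

lemma sum_weight_of_forall_not {S : Finset α} (h : ∀ x ∈ S, ¬ P x) :
    ∑ x ∈ S, weight P β x = β * #S := by
  simp [weight, sum_ite_of_false h, mul_comm]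

lemma weight_nonneg (hβ : 0 ≤ β) (x : α) : 0 ≤ weight P β x := by
  unfold weight; split_ifs <;> linarith

lemma downClosed_isIndep (c : ℕ) : DownClosed (IsIndep P c) :=
  ⟨Or.inl (by simp), fun _ _ hA hBA =>
    hA.imp (fun h x hx => h x (hBA hx)) fun h => (sum_le_sum_of_subset hBA).trans h⟩

lemma load_insert_le [DecidableEq α] (S : Finset α) (e : α) :
    load P (insert e S) ≤ load P S + if P e then 2 else 1 := by
  by_cases he : e ∈ S
  · rw [insert_eq_of_mem he]; omega
  · rw [load, sum_insert he, add_comm]; rfl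

variable [Fintype α]

lemma isIndep_filter (c : ℕ) : IsIndep P c (univ.filter P) :=
  Or.inl fun _ hx => (mem_filter.1 hx).2

lemma isIndep_filter_not : IsIndep P #(univ.filter (¬ P ·)) (univ.filter (¬ P ·)) :=
  Or.inr (load_of_forall_not fun _ hx => (mem_filter.1 hx).2).le

variable [DecidableEq α] {c : ℕ}

lemma isIndep_insert_sdiff (hc : 2 * #(univ.filter P) ≤ c + 3) {B Z : Finset α}
    (hB : IsIndep P c B) (hZB : Z ⊆ B) (hZ : #Z = 2) (e : α) :
    IsIndep P c (insert e (B \ Z)) := by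
  have hsplit : load P (B \ Z) + load P Z = load P B := sum_sdiff hZB
  have hins := load_insert_le (P := P) (B \ Z) e
  rcases hB with hB | hB
  · by_cases he : P e
    · refine Or.inl fun x hx => ?_
      rcases mem_insert.1 hx with rfl | hx
      exacts [he, hB x (mem_sdiff.1 hx).1]
    · have hBA : #B ≤ #(univ.filter P) :=
        card_le_card fun x hx => mem_filter.2 ⟨mem_univ x, hB x hx⟩
      rw [load_of_forall hB, load_of_forall fun x hx => hB x (hZB hx), hZ] at hsplit
      rw [if_neg he] at hins
      exact Or.inr (by omega)
  · have := card_le_load (P := P) Z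
    exact Or.inr (by split_ifs at hins <;> omega)

lemma extendible_isIndep (hc : 2 * #(univ.filter P) ≤ c + 3) : Extendible 2 (IsIndep P c) := by
  intro A B e hAB _ hB hA
  by_cases h : #(B \ A) ≤ 2
  · exact ⟨B \ A, Subset.rfl, h, by rwa [Finset.sdiff_sdiff_eq_self hAB]⟩
  · obtain ⟨Z, hZ, hZ2⟩ := exists_subset_card_eq (show 2 ≤ #(B \ A) by omega)
    exact ⟨Z, hZ, hZ2.le, isIndep_insert_sdiff hc hB (hZ.trans sdiff_subset) hZ2 e⟩

lemma two_le_card_of_isIndep_insert_sdiff (hc : c + 2 ≤ 2 * #(univ.filter P)) {e : α}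
    (he : ¬ P e) {Z : Finset α} (hZ : Z ⊆ univ.filter P)
    (h : IsIndep P c (insert e (univ.filter P \ Z))) : 2 ≤ #Z := by
  have heZ : e ∉ univ.filter P \ Z := fun h => he (mem_filter.1 (mem_sdiff.1 h).1).2
  rcases h with h | h
  · exact absurd (h e (mem_insert_self _ _)) he
  · rw [load, sum_insert heZ, if_neg he, ← load,
      load_of_forall fun x hx => (mem_filter.1 (mem_sdiff.1 hx).1).2,
      card_sdiff_of_subset hZ] at h
    have := card_le_card hZ
    omega

lemma not_isIndep_insert_filter (hc : c + 2 ≤ 2 * #(univ.filter P)) {e : α}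
    (he : e ∉ univ.filter P) : ¬ IsIndep P c (insert e (univ.filter P)) := fun h => by
  have := two_le_card_of_isIndep_insert_sdiff hc (by simpa using he) (empty_subset _)
    (by rwa [sdiff_empty])
  simp at this

lemma localOpt_filter (hβ : β ≤ 2) (hc : c + 2 ≤ 2 * #(univ.filter P)) :
    LocalOpt 2 (IsIndep P c) (fun S => ∑ x ∈ S, weight P β x) (univ.filter P) := by
  intro e he Z hZ hZ2 h
  have hPe : ¬ P e := by simpa using he
  have hZ2' : #Z = 2 := le_antisymm hZ2 (two_le_card_of_isIndep_insert_sdiff hc hPe hZ h)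
  have heZ : e ∉ univ.filter P \ Z := fun h => he (mem_sdiff.1 h).1
  have hPA : ∀ x ∈ univ.filter P, P x := fun x hx => (mem_filter.1 hx).2
  dsimp only
  rw [sum_insert heZ, sum_weight_of_forall fun x hx => hPA x (mem_sdiff.1 hx).1,
    sum_weight_of_forall hPA, card_sdiff_of_subset hZ, Nat.cast_sub (card_le_card hZ), hZ2',
    weight, if_neg hPe]
  push_cast
  linarith

lemma two_mul_card_sdiff_le {T : Finset α} (hT : load P T ≤ #(univ.filter (¬ P ·))) :
    2 * #(T \ univ.filter (¬ P ·)) ≤ #(univ.filter (¬ P ·) \ T) := by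
  have hload :
      load P (T ∩ univ.filter (¬ P ·)) + load P (T \ univ.filter (¬ P ·)) = load P T :=
    sum_inter_add_sum_sdiff _ _ _
  rw [load_of_forall_not fun x hx => (mem_filter.1 (mem_inter.1 hx).2).2,
    load_of_forall fun x hx => by simpa using (mem_sdiff.1 hx).2] at hload
  have hcard := card_sdiff_add_card_inter (univ.filter (¬ P ·)) T
  rw [inter_comm] at hcard
  omega

lemma addStable_filter_not (hβ : 0 < β) (hγ : 0 ≤ γ) (hγβ : γ < 2 * β)
    (hab : γ * #(univ.filter P) < β * #(univ.filter (¬ P ·))) :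
    AddStable (IsIndep P #(univ.filter (¬ P ·))) (weight P β) γ (univ.filter (¬ P ·)) := by
  refine addStable_of_mul_sum_sdiff_lt isIndep_filter_not fun T hT hTS => ?_
  rw [sum_weight_of_forall fun x hx => by simpa using (mem_sdiff.1 hx).2,
    sum_weight_of_forall_not fun x hx => (mem_filter.1 (mem_sdiff.1 hx).1).2]
  rcases hT with hT | hT
  · have hdisj : Disjoint (univ.filter (¬ P ·)) T :=
      disjoint_left.2 fun x hxS hxT => (mem_filter.1 hxS).2 (hT x hxT)
    have hcard : #(T \ univ.filter (¬ P ·)) ≤ #(univ.filter P) :=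
      card_le_card fun x hx => mem_filter.2 ⟨mem_univ x, hT x (mem_sdiff.1 hx).1⟩
    rw [sdiff_eq_self_of_disjoint hdisj]
    calc γ * #(T \ univ.filter (¬ P ·)) ≤ γ * #(univ.filter P) := by gcongr
      _ < _ := hab
  · have hcard := two_mul_card_sdiff_le hT
    rcases Nat.eq_zero_or_pos #(T \ univ.filter (¬ P ·)) with h0 | h0
    · have hne : (univ.filter (¬ P ·) \ T).Nonempty := by
        rw [nonempty_iff_ne_empty, Ne, sdiff_eq_empty_iff_subset]
        exact fun hST => hTS (Subset.antisymm (sdiff_eq_empty_iff_subset.1 (card_eq_zero.1 h0)) hST)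
      rw [h0, Nat.cast_zero, mul_zero]
      exact mul_pos hβ (by exact_mod_cast hne.card_pos)
    · have hcard' : (2 : ℝ) * #(T \ univ.filter (¬ P ·)) ≤ #(univ.filter (¬ P ·) \ T) := by
        exact_mod_cast hcard
      have h1 : (1 : ℝ) ≤ #(T \ univ.filter (¬ P ·)) := by exact_mod_cast h0
      nlinarith

end LoadSystem

open LoadSystem

/-- For every `ε ∈ (0,1)` there is a `2`-extendible system with
nonnegative additive weights whose instance is `(4−ε)`-stable with unique optimum `S*`,
together with a maximal independent `(2,1)`-locally optimal set `A ≠ S*` satisfying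
`w(S*) ≥ (4−ε)·w(A)`: the `p²` guarantees for `(p,1)`-local search are tight at `p = 2`. -/
theorem local_search_tightness_two_extendible
    (ε : ℝ) (hε0 : 0 < ε) (hε1 : ε < 1) :
    ∃ (n : ℕ) (I : Finset (Fin n) → Prop) (w : Fin n → ℝ)
      (Sstar A : Finset (Fin n)),
      (∀ e, 0 ≤ w e) ∧ DownClosed I ∧ Extendible 2 I ∧
      AddStable I w (4 - ε) Sstar ∧
      A ≠ Sstar ∧ I A ∧ (∀ e, e ∉ A → ¬ I (insert e A)) ∧
      LocalOpt 2 I (fun S => ∑ e ∈ S, w e) A ∧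
      (4 - ε) * (∑ e ∈ A, w e) ≤ ∑ e ∈ Sstar, w e := by
  obtain ⟨k, hk⟩ : ∃ k : ℕ, 8 ≤ ε * k :=
    ⟨⌈8 / ε⌉₊, by rw [mul_comm, ← div_le_iff₀ hε0]; exact Nat.le_ceil _⟩
  let P : Fin (3 * k + 1) → Prop := fun x => (x : ℕ) < k + 1
  have ha : #(univ.filter P) = k + 1 := by
    simp only [P, Fin.card_filter_val_lt]; omega
  have hb : #(univ.filter (¬ P ·)) = 2 * k := by
    have := card_filter_add_card_filter_not (s := univ) P
    rw [ha, card_univ, Fintype.card_fin] at this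
    omega
  have hgap : (4 - ε) * #(univ.filter P) < (2 - ε / 4) * #(univ.filter (¬ P ·)) := by
    rw [ha, hb]; push_cast; nlinarith
  refine ⟨3 * k + 1, IsIndep P #(univ.filter (¬ P ·)), weight P (2 - ε / 4),
    univ.filter (¬ P ·), univ.filter P, weight_nonneg (by linarith), downClosed_isIndep _,
    extendible_isIndep (by omega),
    addStable_filter_not (by linarith) (by linarith) (by linarith) hgap,
    ?_, isIndep_filter _, fun e => not_isIndep_insert_filter (by omega),
    localOpt_filter (by linarith) (by omega), ?_⟩
  · intro h
    have h0 : (0 : Fin (3 * k + 1)) ∈ univ.filter P := by simp [P]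
    rw [h] at h0
    simp [P] at h0
  · rw [sum_weight_of_forall fun x hx => (mem_filter.1 hx).2,
      sum_weight_of_forall_not fun x hx => (mem_filter.1 hx).2]
    exact hgap.le
end
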